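/- arXiv:2202.08030 — 4 statements merged into one kernel-verified Lean document; each statement's English description precedes it below -/
import Mathlib

section
/- Let N = U ⊕ U(2) ⊕ E8(2), where U is the hyperbolic plane with standard basis e, f. If e', f' ∈ N satisfy (e'·e') = (f'·f') = 0 and (e'·f') = 1 (i.e. they are standard generators of an embedded copy of U), then e' + f' ≡ e + f modulo the subgroup 2U ⊕ U(2) ⊕ E8(2). Concretely: writing e' = ae + bf + u and f' = ce + df + w with a,b,c,d ∈ ℤ and u, w ∈ U(2) ⊕ E8(2), either a,d are odd and b,c even, or a,d are even and b,c odd. -/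
/-!
We model the lattice `N = U ⊕ U(2) ⊕ E8(2)` as `ℤ¹²` with an explicit Gram matrix:
coordinates 0,1 span the hyperbolic plane `U` (basis `e, f`), coordinates 2,3 span
`U(2)` (basis `h, k`), and coordinates 4,…,11 span `E8(2)` (the negative definite
even unimodular `E8` lattice with its form doubled; the E8 Dynkin diagram used is
the chain 4-5-6-7-8-9-10 with the extra node 11 attached to node 6).
-/

open Matrix

/-- Gram matrix of `N = U ⊕ U(2) ⊕ E8(2)`. -/
def NGram : Matrix (Fin 12) (Fin 12) ℤ :=
  !![0,1,0,0, 0,0,0,0,0,0,0,0;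
     1,0,0,0, 0,0,0,0,0,0,0,0;
     0,0,0,2, 0,0,0,0,0,0,0,0;
     0,0,2,0, 0,0,0,0,0,0,0,0;
     0,0,0,0, -4,2,0,0,0,0,0,0;
     0,0,0,0, 2,-4,2,0,0,0,0,0;
     0,0,0,0, 0,2,-4,2,0,0,0,2;
     0,0,0,0, 0,0,2,-4,2,0,0,0;
     0,0,0,0, 0,0,0,2,-4,2,0,0;
     0,0,0,0, 0,0,0,0,2,-4,2,0;
     0,0,0,0, 0,0,0,0,0,2,-4,0;
     0,0,0,0, 0,0,2,0,0,0,0,-4]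

/-- The symmetric bilinear form of the lattice `N`. -/
def Nform (x y : Fin 12 → ℤ) : ℤ := x ⬝ᵥ NGram.mulVec y

/-- The standard hyperbolic vector `e` of the `U` summand of `N`. -/
def eN : Fin 12 → ℤ := Pi.single 0 1

/-- The standard hyperbolic vector `f` of the `U` summand of `N`. -/
def fN : Fin 12 → ℤ := Pi.single 1 1

/-- The character `ε : N → ℤ/2`, `ε(x) = (x·(e+f)) mod 2`. -/
def epsN (x : Fin 12 → ℤ) : ZMod 2 := ((Nform x (eN + fN) : ℤ) : ZMod 2)

/-! Modulo 2 the form of `N` only sees the summand `U`, and since every norm in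
`U(2) ⊕ E8(2)` is divisible by 4, also `x·x ≡ 2 x₀x₁ (mod 4)`. For `e' = (a, b, …)` and
`f' = (c, d, …)` the equations `e'·e' = f'·f' = 0` and `e'·f' = 1` therefore say that `ab` and
`cd` are even and `ad + bc` is odd, which leaves only the two stated parity patterns. -/

lemma Nform_eq (x y : Fin 12 → ℤ) :
    Nform x y = x 0 * y 1 + x 1 * y 0 + 2 * (x 2 * y 3 + x 3 * y 2)
      + (x 4 * (-4 * y 4 + 2 * y 5) + x 5 * (2 * y 4 - 4 * y 5 + 2 * y 6)
       + x 6 * (2 * y 5 - 4 * y 6 + 2 * y 7 + 2 * y 11)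
       + x 7 * (2 * y 6 - 4 * y 7 + 2 * y 8)
       + x 8 * (2 * y 7 - 4 * y 8 + 2 * y 9)
       + x 9 * (2 * y 8 - 4 * y 9 + 2 * y 10)
       + x 10 * (2 * y 9 - 4 * y 10)
       + x 11 * (2 * y 6 - 4 * y 11)) := by
  simp [Nform, NGram, mulVec, dotProduct, Fin.sum_univ_succ]
  ring

-- The witnesses below are the `U(2) ⊕ E8(2)` parts of `x·y` and `x·x`, divided by 2 and 4.
lemma Nform_modEq_two (x y : Fin 12 → ℤ) :
    Nform x y ≡ x 0 * y 1 + x 1 * y 0 [ZMOD 2] := by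
  refine Int.modEq_iff_dvd.2 ⟨-(x 2 * y 3 + x 3 * y 2
      + (x 4 * (-2 * y 4 + y 5) + x 5 * (y 4 - 2 * y 5 + y 6)
       + x 6 * (y 5 - 2 * y 6 + y 7 + y 11)
       + x 7 * (y 6 - 2 * y 7 + y 8)
       + x 8 * (y 7 - 2 * y 8 + y 9)
       + x 9 * (y 8 - 2 * y 9 + y 10)
       + x 10 * (y 9 - 2 * y 10)
       + x 11 * (y 6 - 2 * y 11))), ?_⟩
  rw [Nform_eq]; ring

lemma Nform_self_modEq_four (x : Fin 12 → ℤ) :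
    Nform x x ≡ 2 * (x 0 * x 1) [ZMOD 4] := by
  refine Int.modEq_iff_dvd.2 ⟨-(x 2 * x 3 - x 4 ^ 2 - x 5 ^ 2 - x 6 ^ 2 - x 7 ^ 2 - x 8 ^ 2
    - x 9 ^ 2 - x 10 ^ 2 - x 11 ^ 2 + x 4 * x 5 + x 5 * x 6 + x 6 * x 7 + x 7 * x 8
    + x 8 * x 9 + x 9 * x 10 + x 6 * x 11), ?_⟩
  rw [Nform_eq]; ring

lemma parity_cases_of_odd_add_mul {a b c d : ℤ} (hab : Even (a * b)) (hcd : Even (c * d))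
    (had : Odd (a * d + b * c)) :
    (Odd a ∧ Odd d ∧ Even b ∧ Even c) ∨ (Even a ∧ Even d ∧ Odd b ∧ Odd c) := by
  simp only [← Int.not_even_iff_odd, Int.even_add, Int.even_mul] at *
  tauto

/-- If `e', f' ∈ N` satisfy `(e'·e') = (f'·f') = 0` and `(e'·f') = 1`
(standard generators of an embedded copy of `U`), then `e' + f' ≡ e + f` modulo
`2U ⊕ U(2) ⊕ E8(2)`.  Concretely, writing `e' = a·e + b·f + u`, `f' = c·e + d·f + w`
(so `a = e' 0`, `b = e' 1`, `c = f' 0`, `d = f' 1`), either `a, d` are odd and `b, c`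
are even, or `a, d` are even and `b, c` are odd. -/
theorem stmt_0 (e' f' : Fin 12 → ℤ)
    (h1 : Nform e' e' = 0) (h2 : Nform f' f' = 0) (h3 : Nform e' f' = 1) :
    (Odd (e' 0) ∧ Odd (f' 1) ∧ Even (e' 1) ∧ Even (f' 0)) ∨
    (Even (e' 0) ∧ Even (f' 1) ∧ Odd (e' 1) ∧ Odd (f' 0)) := by
  have he := Nform_self_modEq_four e'
  have hf := Nform_self_modEq_four f'
  have hef := Nform_modEq_two e' f'
  rw [h1] at he
  rw [h2] at hf
  rw [h3] at hef
  unfold Int.ModEq at he hf hef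
  exact parity_cases_of_odd_add_mul (Int.even_iff.2 (by omega)) (Int.even_iff.2 (by omega))
    (Int.odd_iff.2 (by omega))
end

section
/- Let N = U ⊕ U(2) ⊕ E8(2) and define ε: N → ℤ/2 by ε(x) = (x·(e+f)) mod 2, where e, f are the standard generators of the U summand. Then ε does not depend on the choice of embedding of U into N as an orthogonal direct summand of this form; consequently α*(ε) = ε for every isometry α of N. -/
/-!
We model the lattice `N = U ⊕ U(2) ⊕ E8(2)` as `ℤ¹²` with an explicit Gram matrix:
coordinates 0,1 span the hyperbolic plane `U` (basis `e, f`), coordinates 2,3 span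
`U(2)` (basis `h, k`), and coordinates 4,…,11 span `E8(2)` (the negative definite
even unimodular `E8` lattice with its form doubled; the E8 Dynkin diagram used is
the chain 4-5-6-7-8-9-10 with the extra node 11 attached to node 6).
-/

open Matrix

/-!
Modulo 2 the form of `N` only sees the `U`-coordinates: `(x·y) ≡ x₀y₁ + x₁y₀`, since every
other entry of the Gram matrix is even. An isotropic vector has `(x²) = 2x₀x₁ + 4(…)`, so
`x₀x₁` is even. Reducing a hyperbolic pair `e', f'` mod 2 therefore gives two isotropic vectors
of the hyperbolic plane over `𝔽₂` pairing to 1, which must be `(1,0)` and `(0,1)` in some order;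
hence `e' + f' ≡ e + f` on the `U`-coordinates and `x·(e'+f') ≡ x·(e+f)`. An isometry `α`
satisfies `α x·(e+f) = x·(α⁻¹e + α⁻¹f)`, and `α⁻¹e, α⁻¹f` is again a hyperbolic pair.
-/

lemma Nform_expand (x y : Fin 12 → ℤ) : Nform x y =
    x 0 * y 1 + x 1 * y 0 +
    2 * (x 2 * y 3 + x 3 * y 2) +
    2 * (x 4 * y 5 + x 5 * y 4 + x 5 * y 6 + x 6 * y 5 + x 6 * y 7 + x 7 * y 6 +
         x 7 * y 8 + x 8 * y 7 + x 8 * y 9 + x 9 * y 8 + x 9 * y 10 + x 10 * y 9 +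
         x 6 * y 11 + x 11 * y 6) -
    4 * (x 4 * y 4 + x 5 * y 5 + x 6 * y 6 + x 7 * y 7 + x 8 * y 8 + x 9 * y 9 +
         x 10 * y 10 + x 11 * y 11) := by
  simp only [Nform, dotProduct, mulVec, NGram, of_apply, cons_val', cons_val_fin_one,
    Fin.sum_univ_succ, Fin.isValue, cons_val_zero, cons_val_succ, Fin.succ_zero_eq_one,
    Fin.succ_one_eq_two, Fin.reduceSucc, Finset.univ_unique, Fin.default_eq_zero,
    Finset.sum_singleton, zero_mul, one_mul, add_zero, zero_add, neg_mul]
  ring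

lemma Nform_self (x : Fin 12 → ℤ) : Nform x x = 2 * (x 0 * x 1) + 4 * (x 2 * x 3 +
    (x 4 * x 5 + x 5 * x 6 + x 6 * x 7 + x 7 * x 8 + x 8 * x 9 + x 9 * x 10 + x 6 * x 11) -
    (x 4 * x 4 + x 5 * x 5 + x 6 * x 6 + x 7 * x 7 + x 8 * x 8 + x 9 * x 9 + x 10 * x 10 +
      x 11 * x 11)) := by
  rw [Nform_expand]
  ring

lemma Nform_intCast_zmod_two (x y : Fin 12 → ℤ) :
    (Nform x y : ZMod 2) = x 0 * y 1 + x 1 * y 0 := by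
  rw [Nform_expand]
  push_cast
  rw [show (2 : ZMod 2) = 0 from rfl, show (4 : ZMod 2) = 0 from rfl]
  ring

lemma intCast_mul_eq_zero_of_Nform_self_eq_zero {x : Fin 12 → ℤ} (hx : Nform x x = 0) :
    (x 0 : ZMod 2) * x 1 = 0 := by
  have hdvd : (2 : ℤ) ∣ x 0 * x 1 := by
    have := Nform_self x
    omega
  exact_mod_cast (ZMod.intCast_zmod_eq_zero_iff_dvd _ 2).2 hdvd

lemma ZMod.two_add_eq_one_of_hyperbolic {a b c d : ZMod 2} (hab : a * b = 0) (hcd : c * d = 0)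
    (h : a * d + b * c = 1) : a + c = 1 ∧ b + d = 1 := by
  revert a b c d
  decide

lemma epsN_eq (x : Fin 12 → ℤ) : epsN x = x 0 + x 1 := by
  rw [epsN, Nform_intCast_zmod_two]
  simp [eN, fN]

theorem Nform_add_intCast_zmod_two_eq_epsN {e f : Fin 12 → ℤ} (he : Nform e e = 0)
    (hf : Nform f f = 0) (hef : Nform e f = 1) (x : Fin 12 → ℤ) :
    (Nform x (e + f) : ZMod 2) = epsN x := by
  have hpair : (e 0 : ZMod 2) * f 1 + e 1 * f 0 = 1 := by
    simpa [hef] using (Nform_intCast_zmod_two e f).symm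
  obtain ⟨hsum₀, hsum₁⟩ := ZMod.two_add_eq_one_of_hyperbolic
    (intCast_mul_eq_zero_of_Nform_self_eq_zero he)
    (intCast_mul_eq_zero_of_Nform_self_eq_zero hf) hpair
  rw [Nform_intCast_zmod_two, epsN_eq, Pi.add_apply, Pi.add_apply, Int.cast_add, Int.cast_add,
    hsum₀, hsum₁, mul_one, mul_one]

lemma Equiv.apply_symm_of_forall_apply_apply {M R : Type*} (B : M → M → R) (α : M ≃ M)
    (hα : ∀ x y, B (α x) (α y) = B x y) (x y : M) : B x (α.symm y) = B (α x) y := by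
  simpa using (hα x (α.symm y)).symm

/-- The character `ε(x) = (x·(e+f)) mod 2` on `N = U ⊕ U(2) ⊕ E8(2)`
does not depend on the choice of hyperbolic pair: for any `e', f' ∈ N` with
`(e'²) = (f'²) = 0` and `(e'·f') = 1`, the functional `x ↦ (x·(e'+f')) mod 2` equals `ε`.
Consequently `α*(ε) = ε` for every isometry `α` of `N`. -/
theorem stmt_1 :
    (∀ e' f' : Fin 12 → ℤ, Nform e' e' = 0 → Nform f' f' = 0 → Nform e' f' = 1 →
      ∀ x : Fin 12 → ℤ, ((Nform x (e' + f') : ℤ) : ZMod 2) = epsN x) ∧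
    (∀ α : (Fin 12 → ℤ) ≃ₗ[ℤ] (Fin 12 → ℤ),
      (∀ x y : Fin 12 → ℤ, Nform (α x) (α y) = Nform x y) →
      ∀ x : Fin 12 → ℤ, epsN (α x) = epsN x) := by
  refine ⟨fun e' f' he hf hef ↦ Nform_add_intCast_zmod_two_eq_epsN he hf hef, ?_⟩
  intro α hα x
  have hsymm (u v : Fin 12 → ℤ) : Nform (α.symm u) (α.symm v) = Nform u v := by
    simpa using Equiv.apply_symm_of_forall_apply_apply Nform α.toEquiv hα (α.symm u) v
  have hpair := Nform_add_intCast_zmod_two_eq_epsN (e := α.symm eN) (f := α.symm fN)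
    ((hsymm _ _).trans (by decide)) ((hsymm _ _).trans (by decide))
    ((hsymm _ _).trans (by decide)) x
  rw [← hpair, ← map_add, epsN]
  exact congrArg _ (Equiv.apply_symm_of_forall_apply_apply Nform α.toEquiv hα x _).symm
end

section
/- Let N = U ⊕ U(2) ⊕ E8(2) with the character ε: N → ℤ/2, ε(x) = (x·(e+f)) mod 2. Let L ⊆ N be a sublattice such that ε restricted to L is non-zero. Then the orthogonal complement L⊥ of L in N is 2-divisible as an even lattice: every y ∈ L⊥ satisfies (y²) ≡ 0 mod 4. -/
/-!
We model the lattice `N = U ⊕ U(2) ⊕ E8(2)` as `ℤ¹²` with an explicit Gram matrix: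
coordinates 0,1 span the hyperbolic plane `U` (basis `e, f`), coordinates 2,3 span
`U(2)` (basis `h, k`), and coordinates 4,…,11 span `E8(2)` (the negative definite
even unimodular `E8` lattice with its form doubled; the E8 Dynkin diagram used is
the chain 4-5-6-7-8-9-10 with the extra node 11 attached to node 6).
-/

open Matrix

lemma eps_eq (x : Fin 12 → ℤ) : Nform x (eN + fN) = x 0 + x 1 := by
  simp [Nform, NGram, eN, fN, mulVec, dotProduct, Fin.sum_univ_succ, Pi.single_apply]

lemma key (a b c d : ZMod 2) (h1 : a * d + b * c = 0) (h2 : c + d ≠ 0) : a * b = 0 := by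
  revert h1 h2; revert a b c d; decide

set_option maxHeartbeats 1000000 in
/-- Let `L ⊆ N = U ⊕ U(2) ⊕ E8(2)` be a sublattice on which the
character `ε` is non-zero.  Then the orthogonal complement of `L` in `N` is
`2`-divisible as an even lattice: every `y ∈ L⊥` has `(y²) ≡ 0 mod 4`. -/
theorem stmt_3 (L : Submodule ℤ (Fin 12 → ℤ)) (hL : ∃ x ∈ L, epsN x ≠ 0)
    (y : Fin 12 → ℤ) (hy : ∀ x ∈ L, Nform y x = 0) :
    Nform y y % 4 = 0 := by
  obtain ⟨x, hxL, hx⟩ := hL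
  rw [epsN, eps_eq] at hx
  have hyx := hy x hxL
  have h2 : ((y 0 : ZMod 2) * x 1 + (y 1 : ZMod 2) * x 0) = 0 := by
    have h := congrArg (fun t : ℤ => (t : ZMod 2)) hyx
    simp [Nform, NGram, mulVec, dotProduct, Fin.sum_univ_succ, Fin.ext_iff, Fin.val_succ] at h
    ring_nf at h
    simpa [show ((2:ℤ) : ZMod 2) = 0 from rfl, show ((4:ℤ) : ZMod 2) = 0 from rfl,
      show (2 : ZMod 2) = 0 from rfl, show (4 : ZMod 2) = 0 from rfl] using h
  have hodd : ((x 0 : ZMod 2) + (x 1 : ZMod 2)) ≠ 0 := by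
    intro h; apply hx; push_cast; rw [Int.cast_add] at *; exact h
  have hdvd : (2:ℤ) ∣ y 0 * y 1 := by
    have h0 : ((y 0 * y 1 : ℤ) : ZMod 2) = 0 := by
      push_cast
      exact key (y 0 : ZMod 2) (y 1 : ZMod 2) (x 0 : ZMod 2) (x 1 : ZMod 2) h2
        (by simpa [add_comm] using hodd)
    exact (ZMod.intCast_zmod_eq_zero_iff_dvd _ 2).mp h0
  have h4 : (4:ℤ) ∣ Nform y y := by
    have h0 : ((Nform y y : ℤ) : ZMod 4) = 0 := ?_
    · exact_mod_cast (ZMod.intCast_zmod_eq_zero_iff_dvd _ 4).mp h0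
    obtain ⟨k, hk⟩ := hdvd
    simp [Nform, NGram, mulVec, dotProduct, Fin.sum_univ_succ, Fin.ext_iff, Fin.val_succ]
    ring_nf
    have hcast : ((y 0 : ℤ) : ZMod 4) * ((y 1 : ℤ) : ZMod 4) = 2 * (k : ZMod 4) := by
      rw [← Int.cast_mul, hk]; push_cast; ring
    rw [hcast]
    ring_nf
    simp [show (4:ZMod 4) = 0 from rfl]
  omega
end

section
/- Let T = ℤx ⊕ ℤy be a rank-2 positive-definite lattice with Gram matrix [[4a, 2b],[2b, 4c]]. In N = U ⊕ U(2) ⊕ E8(2) with U = ℤe⊕ℤf and U(2) = ℤh⊕ℤk (so (h²)=(k²)=0, (h·k)=2), the assignment x ↦ e + 2af, y ↦ e + (2b−2a)f + h + (c−b+a)k is an isometric embedding of T into U ⊕ U(2) ⊂ N on which the character ε(z) = (z·(e+f)) mod 2 takes value 1 on both the images of x and y. -/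
/-!
We model the lattice `N = U ⊕ U(2) ⊕ E8(2)` as `ℤ¹²` with an explicit Gram matrix:
coordinates 0,1 span the hyperbolic plane `U` (basis `e, f`), coordinates 2,3 span
`U(2)` (basis `h, k`), and coordinates 4,…,11 span `E8(2)` (the negative definite
even unimodular `E8` lattice with its form doubled; the E8 Dynkin diagram used is
the chain 4-5-6-7-8-9-10 with the extra node 11 attached to node 6).
-/

open Matrix

/-- The standard generator `h` of the `U(2)` summand of `N`. -/
def hN : Fin 12 → ℤ := Pi.single 2 1

/-- The standard generator `k` of the `U(2)` summand of `N`. -/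
def kN : Fin 12 → ℤ := Pi.single 3 1

def uVec (p q r s : ℤ) : Fin 12 → ℤ := p • eN + q • fN + r • hN + s • kN

lemma uVec_eq (p q r s : ℤ) : uVec p q r s = ![p, q, r, s, 0, 0, 0, 0, 0, 0, 0, 0] := by
  funext i
  fin_cases i <;> simp [uVec, eN, fN, hN, kN]

lemma Nform_uVec (p q r s p' q' r' s' : ℤ) :
    Nform (uVec p q r s) (uVec p' q' r' s') = p * q' + q * p' + 2 * (r * s' + s * r') := by
  simp only [Nform, dotProduct, uVec_eq, mulVec, NGram, of_apply, cons_val', cons_val_fin_one,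
    Fin.sum_univ_succ, cons_val_zero, cons_val_succ, mul_zero, Finset.univ_unique,
    Fin.default_eq_zero, Finset.sum_const_zero, add_zero, zero_mul, one_mul, zero_add]
  ring

lemma epsN_uVec (p q r s : ℤ) : epsN (uVec p q r s) = ((p + q : ℤ) : ZMod 2) := by
  have hef : eN + fN = uVec 1 1 0 0 := by simp [uVec]
  rw [epsN, hef, Nform_uVec]
  congr 1
  ring

lemma linearIndependent_uVec_pair {p q r s p' q' r' s' : ℤ} (hdet : p * r' - r * p' ≠ 0) :
    LinearIndependent ℤ ![uVec p q r s, uVec p' q' r' s'] := by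
  rw [LinearIndependent.pair_iff]
  intro x y hxy
  have he : x * p + y * p' = 0 := by simpa [uVec_eq] using congrFun hxy 0
  have hh : x * r + y * r' = 0 := by simpa [uVec_eq] using congrFun hxy 2
  have hx : x * (p * r' - r * p') = 0 := by linear_combination r' * he - p' * hh
  have hy : y * (p * r' - r * p') = 0 := by linear_combination p * hh - r * he
  exact ⟨(mul_eq_zero.1 hx).resolve_right hdet, (mul_eq_zero.1 hy).resolve_right hdet⟩

lemma intCast_one_add_two_mul (n : ℤ) : ((1 + 2 * n : ℤ) : ZMod 2) = 1 := by
  push_cast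
  reduce_mod_char

theorem stmt_17_general (a b c : ℤ) :
    Nform (eN + (2 * a) • fN) (eN + (2 * a) • fN) = 4 * a ∧
    Nform (eN + (2 * b - 2 * a) • fN + hN + (c - b + a) • kN)
          (eN + (2 * b - 2 * a) • fN + hN + (c - b + a) • kN) = 4 * c ∧
    Nform (eN + (2 * a) • fN) (eN + (2 * b - 2 * a) • fN + hN + (c - b + a) • kN) = 2 * b ∧
    LinearIndependent ℤ ![eN + (2 * a) • fN, eN + (2 * b - 2 * a) • fN + hN + (c - b + a) • kN] ∧
    epsN (eN + (2 * a) • fN) = 1 ∧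
    epsN (eN + (2 * b - 2 * a) • fN + hN + (c - b + a) • kN) = 1 := by
  have hx : eN + (2 * a) • fN = uVec 1 (2 * a) 0 0 := by simp [uVec]
  have hy : eN + (2 * b - 2 * a) • fN + hN + (c - b + a) • kN =
      uVec 1 (2 * b - 2 * a) 1 (c - b + a) := by simp [uVec]
  rw [hx, hy, Nform_uVec, Nform_uVec, Nform_uVec, epsN_uVec, epsN_uVec]
  refine ⟨by ring, by ring, by ring, linearIndependent_uVec_pair (by norm_num), ?_, ?_⟩
  · exact intCast_one_add_two_mul a
  · convert intCast_one_add_two_mul (b - a) using 3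
    ring

/-- Let `T = ℤx ⊕ ℤy` be a rank-2 positive definite lattice with Gram
matrix `[[4a, 2b], [2b, 4c]]`.  Then `x ↦ e + 2a·f`, `y ↦ e + (2b−2a)·f + h + (c−b+a)·k`
is an isometric (injective) embedding of `T` into `U ⊕ U(2) ⊂ N` on which the character
`ε` takes the value `1` on the images of both `x` and `y`. -/
theorem stmt_17 (a b c : ℤ) (hpos : 0 < a) (hposdet : 0 < 4 * (a * c) - b * b) :
    Nform (eN + (2 * a) • fN) (eN + (2 * a) • fN) = 4 * a ∧
    Nform (eN + (2 * b - 2 * a) • fN + hN + (c - b + a) • kN)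
          (eN + (2 * b - 2 * a) • fN + hN + (c - b + a) • kN) = 4 * c ∧
    Nform (eN + (2 * a) • fN) (eN + (2 * b - 2 * a) • fN + hN + (c - b + a) • kN) = 2 * b ∧
    LinearIndependent ℤ ![eN + (2 * a) • fN, eN + (2 * b - 2 * a) • fN + hN + (c - b + a) • kN] ∧
    epsN (eN + (2 * a) • fN) = 1 ∧
    epsN (eN + (2 * b - 2 * a) • fN + hN + (c - b + a) • kN) = 1 :=
  stmt_17_general a b c
end
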